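/- The map ρ_1 : 𝓕^{2N−3} → 𝓕^{2N−5}, (f_12, f_13, f_23, h) ↦ (f_23 + g_23, h), where g_23 is the case-1 virtual interaction induced by f_12 and f_13, is an open map: it sends open subsets of 𝓕^{2N−3} to open subsets of 𝓕^{2N−5}. -/

import Mathlib

open Set Filter Topology MeasureTheory Matrix Function

attribute [local instance] Classical.propDecidable

noncomputable section

/-- `f̃(d) = d * f(d)`. -/
def tildeFn (f : ℝ → ℝ) : ℝ → ℝ := fun d => d * f d

/-- Membership in the class `𝓕` of monotone interaction laws:
`f` is `C¹` on `ℝ₊ = (0,∞)`, `f̃′ > 0` on `ℝ₊`, `f̃` has a zero, and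
`∫_d^1 f̃(x) dx → −∞` as `d → 0⁺`. -/
def MemF (f : ℝ → ℝ) : Prop :=
  ContDiffOn ℝ 1 f (Set.Ioi 0) ∧
  (∀ d > (0:ℝ), 0 < deriv (tildeFn f) d) ∧
  (∃ d > (0:ℝ), tildeFn f d = 0) ∧
  Tendsto (fun d => ∫ x in d..(1:ℝ), tildeFn f x) (𝓝[>] (0:ℝ)) atBot

/-- The space `C¹(ℝ₊, ℝ)`. -/
def C1Pos : Type := {f : ℝ → ℝ // ContDiffOn ℝ 1 f (Set.Ioi 0)}

/-- The Whitney `C¹`-topology on `C¹(ℝ₊, ℝ)`, generated by the basic open sets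
`B_δ(f) = {g : |g(d) − f(d)| + |g′(d) − f′(d)| < δ(d) for all d > 0}`. -/
instance : TopologicalSpace C1Pos :=
  TopologicalSpace.generateFrom
    { S | ∃ (f : C1Pos) (δ : ℝ → ℝ), ContinuousOn δ (Set.Ioi 0) ∧ (∀ d > (0:ℝ), 0 < δ d) ∧
        S = { g : C1Pos | ∀ d > (0:ℝ), |g.1 d - f.1 d| + |deriv g.1 d - deriv f.1 d| < δ d } }

/-- The class `𝓕` as a topological space (subspace of `C¹(ℝ₊,ℝ)`). -/
def FF : Type := {f : C1Pos // MemF f.1}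

instance : TopologicalSpace FF := instTopologicalSpaceSubtype

/-- `G` is a triangulated Laman graph: there is a Henneberg-type construction order
(a relabeling `σ`) starting from the edge between the first two vertices, in which every
later vertex is joined to exactly two earlier, adjacent, vertices. -/
def IsTLG {N : ℕ} (G : SimpleGraph (Fin N)) : Prop :=
  2 ≤ N ∧
  ∃ (σ : Equiv.Perm (Fin N)) (par₁ par₂ : Fin N → Fin N),
    (∀ k : Fin N, 2 ≤ (k : ℕ) →
      ((par₁ k : ℕ) < (k : ℕ) ∧ (par₂ k : ℕ) < (k : ℕ) ∧ par₁ k ≠ par₂ k ∧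
        G.Adj (σ (par₁ k)) (σ (par₂ k)))) ∧
    (∀ i j : Fin N, G.Adj (σ i) (σ j) ↔
      (((i : ℕ) = 0 ∧ (j : ℕ) = 1) ∨ ((i : ℕ) = 1 ∧ (j : ℕ) = 0) ∨
       (2 ≤ (i : ℕ) ∧ (j = par₁ i ∨ j = par₂ i)) ∨
       (2 ≤ (j : ℕ) ∧ (i = par₁ j ∨ i = par₂ j))))

/-- Euclidean distance on `ℝ²` (coordinates `(a,b)`). -/
def dist2 (x y : ℝ × ℝ) : ℝ := Real.sqrt ((x.1 - y.1)^2 + (x.2 - y.2)^2)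

/-- `p` belongs to the configuration space `P`: no collision of adjacent agents. -/
def InConfigSpace {N : ℕ} (G : SimpleGraph (Fin N)) (p : Fin N → ℝ × ℝ) : Prop :=
  ∀ i j, G.Adj i j → p i ≠ p j

/-- `p` is an equilibrium of the RMA system `ẋᵢ = Σ_{j : (i,j) ∈ E} f_ij(d_ij)(x_j − x_i)`. -/
def IsEquilibrium {N : ℕ} (G : SimpleGraph (Fin N)) (f : Fin N → Fin N → ℝ → ℝ)
    (p : Fin N → ℝ × ℝ) : Prop :=
  ∀ i, (∑ j, if G.Adj i j then (f i j (dist2 (p i) (p j))) • (p j - p i) else (0:ℝ×ℝ)) = 0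

/-- The potential function `Φ(p) = Σ_{(i,j) ∈ E} ∫_1^{d_ij} x f_ij(x) dx`
(each edge counted once; the factor 1/2 compensates the double count over ordered pairs). -/
def potential {N : ℕ} (G : SimpleGraph (Fin N)) (f : Fin N → Fin N → ℝ → ℝ)
    (p : Fin N → ℝ × ℝ) : ℝ :=
  (1/2) * ∑ i, ∑ j, if G.Adj i j then ∫ x in (1:ℝ)..(dist2 (p i) (p j)), x * f i j x else 0

/-- Coordinate directions on the configuration space, in the order `(a₁,…,a_N,b₁,…,b_N)`. -/
def basisVec {N : ℕ} : (Fin N ⊕ Fin N) → (Fin N → ℝ × ℝ) :=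
  Sum.elim (fun i => Pi.single i ((1:ℝ), (0:ℝ))) (fun i => Pi.single i ((0:ℝ), (1:ℝ)))

/-- The Hessian matrix of `Φ` at `p` in the coordinates `(a₁,…,a_N,b₁,…,b_N)`. -/
def hessian {N : ℕ} (Φ : (Fin N → ℝ × ℝ) → ℝ) (p : Fin N → ℝ × ℝ) :
    Matrix (Fin N ⊕ Fin N) (Fin N ⊕ Fin N) ℝ :=
  Matrix.of fun u v => fderiv ℝ (fun q => fderiv ℝ Φ q (basisVec v)) p (basisVec u)

/-- The inertia `𝐧(M) = (n₊(M), n₀(M), n₋(M))` of a real symmetric matrix: the numbers of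
positive, zero, and negative eigenvalues (counted with multiplicity). -/
def inertia {m : Type*} [Fintype m] [DecidableEq m] (M : Matrix m m ℝ) : ℕ × ℕ × ℕ :=
  if h : M.IsHermitian then
    ((Finset.univ.filter fun i => 0 < h.eigenvalues i).card,
     (Finset.univ.filter fun i => h.eigenvalues i = 0).card,
     (Finset.univ.filter fun i => h.eigenvalues i < 0).card)
  else (0, 0, 0)

/-- The number `n₀(M)` of zero eigenvalues of a real symmetric matrix. -/
def n0 {m : Type*} [Fintype m] [DecidableEq m] (M : Matrix m m ℝ) : ℕ := (inertia M).2.1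

/-- The vector-valued sign function. -/
def sgn3 (x : ℝ) : ℕ × ℕ × ℕ :=
  if 0 < x then (1,0,0) else if x = 0 then (0,1,0) else (0,0,1)

/-- `q` lies in the `SE(2)`-orbit of `p` (rigid motions: rotation by `(c,s)` with
`c² + s² = 1` followed by translation by `(vx,vy)`). -/
def sameOrbit {N : ℕ} (p q : Fin N → ℝ × ℝ) : Prop :=
  ∃ c s vx vy : ℝ, c^2 + s^2 = 1 ∧
    ∀ i, q i = (c * (p i).1 - s * (p i).2 + vx, s * (p i).1 + c * (p i).2 + vy)

/-- The interaction laws determined by an ensemble `ω ∈ 𝓕^{|E|}`. -/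
def ensembleLaws {N : ℕ} {G : SimpleGraph (Fin N)} (ω : G.edgeSet → FF) :
    Fin N → Fin N → ℝ → ℝ :=
  fun i j => if h : G.Adj i j then (ω ⟨s(i,j), G.mem_edgeSet.mpr h⟩).1.1 else 0

/-- The line configuration on the `a`-axis with coordinates `a`. -/
def lineConfig {N : ℕ} (a : Fin N → ℝ) : Fin N → ℝ × ℝ := fun i => (a i, 0)

/-- The matrix `F_p` of a line configuration with coordinates `a`: symmetric, zero row sums,
off-diagonal entries `φ_ij(d_ij)` on edges and `0` otherwise. -/
def FMat {N : ℕ} (G : SimpleGraph (Fin N)) (φ : Fin N → Fin N → ℝ → ℝ)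
    (a : Fin N → ℝ) : Matrix (Fin N) (Fin N) ℝ :=
  Matrix.of fun i j =>
    if i = j then -∑ k, (if G.Adj i k then φ i k |a i - a k| else 0)
    else if G.Adj i j then φ i j |a i - a j| else 0

/-- The matrix `d̃F_p`: off-diagonal entries `f̃′_ij(d_ij)` on edges. -/
def dFMat {N : ℕ} (G : SimpleGraph (Fin N)) (f : Fin N → Fin N → ℝ → ℝ)
    (a : Fin N → ℝ) : Matrix (Fin N) (Fin N) ℝ :=
  FMat G (fun i j d => deriv (tildeFn (f i j)) d) a

/-- Case 1 balanced distance: the (generically unique) `d₁₂(d)` with `0 < d₁₂ < d` and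
`f̃₁₂(d₁₂) = f̃₁₃(d − d₁₂)`. -/
def case1d12 (f12 f13 : ℝ → ℝ) (d : ℝ) : ℝ :=
  Classical.epsilon fun t => 0 < t ∧ t < d ∧ tildeFn f12 t = tildeFn f13 (d - t)

/-- The case-1 virtual interaction: `g̃₂₃(d) = f̃₁₂(d₁₂(d))`. -/
def g23Case1 (f12 f13 : ℝ → ℝ) : ℝ → ℝ :=
  fun d => tildeFn f12 (case1d12 f12 f13 d) / d

/-- Case 2 balanced distance: the (generically unique) `d₁₂(d) > 0` with
`f̃₁₂(d₁₂) + f̃₁₃(d₁₂ + d) = 0`. -/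
def case2d12 (f12 f13 : ℝ → ℝ) (d : ℝ) : ℝ :=
  Classical.epsilon fun t => 0 < t ∧ tildeFn f12 t + tildeFn f13 (t + d) = 0

/-- The case-2 virtual interaction: `g̃₂₃(d) = f̃₁₃(d₁₃(d))`, `d₁₃(d) = d₁₂(d) + d`. -/
def g23Case2 (f12 f13 : ℝ → ℝ) : ℝ → ℝ :=
  fun d => tildeFn f13 (case2d12 f12 f13 d + d) / d

/-- The case-3 virtual interaction: case 2 with the roles of agents 2,3 (and `f₁₂`,`f₁₃`)
interchanged. -/
def g23Case3 (f12 f13 : ℝ → ℝ) : ℝ → ℝ := g23Case2 f13 f12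

/-- The virtual interaction between agents 2 and 3 induced by `f₁₂`, `f₁₃`, chosen according
to which of the three aligned agents (at coordinates `a1`, `a2`, `a3`) lies between the
other two. -/
def virtualG (f12 f13 : ℝ → ℝ) (a1 a2 a3 : ℝ) : ℝ → ℝ :=
  if (a2 < a1 ∧ a1 < a3) ∨ (a3 < a1 ∧ a1 < a2) then g23Case1 f12 f13
  else if (a1 < a2 ∧ a2 < a3) ∨ (a3 < a2 ∧ a2 < a1) then g23Case2 f12 f13
  else g23Case3 f12 f13

/-- The interaction laws of the reduced system: vertex `0` (the last Henneberg vertex,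
the paper's vertex 1) is deleted, reduced vertex `i` is original vertex `i+1`, and the law on
the reduced edge `(0,1)` (the paper's edge `(2,3)`) is `f*₂₃ = f₂₃ + g₂₃`. -/
def reducedLaws {n : ℕ} (f : Fin (n+3) → Fin (n+3) → ℝ → ℝ) (g : ℝ → ℝ) :
    Fin (n+2) → Fin (n+2) → ℝ → ℝ :=
  fun i j => if (i = 0 ∧ j = 1) ∨ (i = 1 ∧ j = 0)
    then fun d => f i.succ j.succ d + g d
    else f i.succ j.succ


/-!
Fix `f₁₂, f₁₃` and put `g = g₂₃`; it is `C¹` on `ℝ₊` because `f₂₃ + g ∈ 𝓕`. In the Whitney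
topology translation by a `C¹` function is continuous (it maps basic balls to basic balls), and
`𝓕` is open in `C¹(ℝ₊, ℝ)`: the three defining conditions on `f̃` survive perturbations controlled
by `δ(d) = min (f̃′(d)/(1+d), f̃(b)/b, 1/d)`, where `f̃(b) > 0`. Hence near `ρ(f₁₂, f₁₃, f₂₃, h)`
the map `(F, h) ↦ (f₁₂, f₁₃, F − g, h)` is a continuous section of `ρ`, and a map with continuous
local sections through every point is open.
-/

theorem isOpenMap_of_eventually_rightInverse {X Y : Type*} [TopologicalSpace X]
    [TopologicalSpace Y] {f : X → Y}
    (h : ∀ x, ∃ g : Y → X, ContinuousAt g (f x) ∧ g (f x) = x ∧ ∀ᶠ y in 𝓝 (f x), f (g y) = y) :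
    IsOpenMap f :=
  IsOpenMap.of_nhds_le fun x => by
    obtain ⟨g, hgc, hgx, hgf⟩ := h x
    calc 𝓝 (f x) = map f (map g (𝓝 (f x))) := by
          rw [Filter.map_map, map_congr (show f ∘ g =ᶠ[𝓝 (f x)] id from hgf), Filter.map_id]
      _ ≤ map f (𝓝 x) := map_mono (hgc.mono_right (congrArg 𝓝 hgx).le)

lemma differentiableAt_of_contDiffOn_Ioi {f : ℝ → ℝ} (hf : ContDiffOn ℝ 1 f (Ioi 0)) {d : ℝ}
    (hd : 0 < d) : DifferentiableAt ℝ f d :=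
  (hf.differentiableOn one_ne_zero).differentiableAt (isOpen_Ioi.mem_nhds hd)

lemma contDiffOn_tildeFn {f : ℝ → ℝ} (hf : ContDiffOn ℝ 1 f (Ioi 0)) :
    ContDiffOn ℝ 1 (tildeFn f) (Ioi 0) :=
  contDiffOn_id.mul hf

lemma deriv_tildeFn {f : ℝ → ℝ} (hf : ContDiffOn ℝ 1 f (Ioi 0)) {d : ℝ} (hd : 0 < d) :
    deriv (tildeFn f) d = f d + d * deriv f d := by
  have h : HasDerivAt (fun x => x * f x) (1 * f d + d * deriv f d) d :=
    (hasDerivAt_id' d).mul (differentiableAt_of_contDiffOn_Ioi hf hd).hasDerivAt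
  rw [show tildeFn f = fun x => x * f x from rfl, h.deriv, one_mul]

lemma tildeFn_sub_tildeFn (u v : ℝ → ℝ) (x : ℝ) :
    tildeFn v x - tildeFn u x = x * (v x - u x) := by
  simp only [tildeFn]; ring

lemma deriv_tildeFn_pos_of_near {u v : ℝ → ℝ} (hu : ContDiffOn ℝ 1 u (Ioi 0))
    (hv : ContDiffOn ℝ 1 v (Ioi 0)) {d : ℝ} (hd : 0 < d)
    (hnear : (1 + d) * (|v d - u d| + |deriv v d - deriv u d|) < deriv (tildeFn u) d) :
    0 < deriv (tildeFn v) d := by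
  rw [deriv_tildeFn hu hd] at hnear
  rw [deriv_tildeFn hv hd]
  nlinarith [neg_abs_le (v d - u d), neg_abs_le (deriv v d - deriv u d),
    abs_nonneg (v d - u d), abs_nonneg (deriv v d - deriv u d)]

lemma MemF.exists_tildeFn_pos {f : ℝ → ℝ} (hf : MemF f) : ∃ b > 0, 0 < tildeFn f b := by
  obtain ⟨hC1, hderiv, ⟨d₀, hd₀, hzero⟩, -⟩ := hf
  have hmono : StrictMonoOn (tildeFn f) (Ioi 0) :=
    strictMonoOn_of_deriv_pos (convex_Ioi 0) (contDiffOn_tildeFn hC1).continuousOn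
      fun x hx => hderiv x (interior_subset hx)
  refine ⟨d₀ + 1, by linarith, ?_⟩
  rw [← hzero]
  exact hmono hd₀ (show (0 : ℝ) < d₀ + 1 by linarith) (by linarith)

lemma tendsto_integral_atBot_of_le_add {φ ψ : ℝ → ℝ} (hφ : ContinuousOn φ (Ioi 0))
    (hψ : ContinuousOn ψ (Ioi 0)) {C : ℝ} (hle : ∀ x > 0, φ x ≤ ψ x + C)
    (hlim : Tendsto (fun d => ∫ x in d..(1 : ℝ), ψ x) (𝓝[>] 0) atBot) :
    Tendsto (fun d => ∫ x in d..(1 : ℝ), φ x) (𝓝[>] 0) atBot := by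
  have hC : Tendsto (fun d : ℝ => C * (1 - d)) (𝓝[>] 0) (𝓝 C) := by
    have hcont : Continuous fun d : ℝ => C * (1 - d) := by fun_prop
    simpa using (hcont.tendsto 0).mono_left nhdsWithin_le_nhds
  refine tendsto_atBot_mono' _ ?_ (hlim.atBot_add hC)
  filter_upwards [Ioo_mem_nhdsGT (zero_lt_one' ℝ)] with d ⟨hd₀, hd₁⟩
  have hsub : uIcc d 1 ⊆ Ioi 0 := by
    rw [uIcc_of_le hd₁.le]; exact fun x hx => hd₀.trans_le hx.1
  have hIψ : IntervalIntegrable ψ volume d 1 :=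
    (hψ.mono hsub).intervalIntegrable
  calc ∫ x in d..(1 : ℝ), φ x ≤ ∫ x in d..(1 : ℝ), (ψ x + C) :=
        intervalIntegral.integral_mono_on hd₁.le ((hφ.mono hsub).intervalIntegrable)
          (hIψ.add intervalIntegrable_const) fun x hx => hle x (hd₀.trans_le hx.1)
    _ = (∫ x in d..(1 : ℝ), ψ x) + C * (1 - d) := by
        rw [intervalIntegral.integral_add hIψ intervalIntegrable_const]; simp [mul_comm]

/-- Divergence of `∫_d^1 φ` to `-∞` forces `φ < 0` somewhere near `0`. -/
lemma exists_zero_of_tendsto_integral_atBot {φ : ℝ → ℝ} (hφ : ContinuousOn φ (Ioi 0))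
    (hlim : Tendsto (fun d => ∫ x in d..(1 : ℝ), φ x) (𝓝[>] 0) atBot)
    {b : ℝ} (hb : 0 < b) (hφb : 0 < φ b) : ∃ a > 0, φ a = 0 := by
  have hsmall : ∀ᶠ d in 𝓝[>] (0 : ℝ), d ∈ Ioo 0 1 := Ioo_mem_nhdsGT one_pos
  obtain ⟨d, hneg, hd₀, hd₁⟩ := ((hlim.eventually (eventually_lt_atBot 0)).and hsmall).exists
  obtain ⟨a, ha, hφa⟩ : ∃ a ∈ Icc d 1, φ a < 0 := by
    by_contra! hnonneg
    exact (intervalIntegral.integral_nonneg hd₁.le hnonneg).not_gt hneg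
  have ha₀ : 0 < a := hd₀.trans_le ha.1
  have hsub : uIcc a b ⊆ Ioi 0 := fun x hx => lt_min ha₀ hb |>.trans_le hx.1
  obtain ⟨x, hx, hφx⟩ := intermediate_value_uIcc (hφ.mono hsub)
    (mem_uIcc_of_le hφa.le hφb.le)
  exact ⟨x, hsub hx, hφx⟩

namespace C1Pos

lemma isOpen_ball (f : C1Pos) {δ : ℝ → ℝ} (hδ : ContinuousOn δ (Ioi 0))
    (hδ₀ : ∀ d > (0 : ℝ), 0 < δ d) :
    IsOpen {g : C1Pos | ∀ d > (0 : ℝ), |g.1 d - f.1 d| + |deriv g.1 d - deriv f.1 d| < δ d} :=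
  TopologicalSpace.isOpen_generateFrom_of_mem ⟨f, δ, hδ, hδ₀, rfl⟩

def sub (g : ℝ → ℝ) (hg : ContDiffOn ℝ 1 g (Ioi 0)) (u : C1Pos) : C1Pos :=
  ⟨u.1 - g, u.2.sub hg⟩

def add (g : ℝ → ℝ) (hg : ContDiffOn ℝ 1 g (Ioi 0)) (u : C1Pos) : C1Pos :=
  ⟨u.1 + g, u.2.add hg⟩

lemma sub_preimage_ball (g : ℝ → ℝ) (hg : ContDiffOn ℝ 1 g (Ioi 0)) (f : C1Pos) (δ : ℝ → ℝ) :
    sub g hg ⁻¹' {v | ∀ d > (0 : ℝ), |v.1 d - f.1 d| + |deriv v.1 d - deriv f.1 d| < δ d} =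
      {w | ∀ d > (0 : ℝ), |w.1 d - (add g hg f).1 d| +
        |deriv w.1 d - deriv (add g hg f).1 d| < δ d} := by
  ext w
  refine forall₂_congr fun d hd => ?_
  have hg' := differentiableAt_of_contDiffOn_Ioi hg hd
  have hsub : deriv (w.1 - g) d = deriv w.1 d - deriv g d :=
    deriv_sub (differentiableAt_of_contDiffOn_Ioi w.2 hd) hg'
  have hadd : deriv (f.1 + g) d = deriv f.1 d + deriv g d :=
    deriv_add (differentiableAt_of_contDiffOn_Ioi f.2 hd) hg'
  simp only [sub, add, Pi.sub_apply, Pi.add_apply, hsub, hadd]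
  ring_nf

lemma continuous_sub (g : ℝ → ℝ) (hg : ContDiffOn ℝ 1 g (Ioi 0)) : Continuous (sub g hg) := by
  refine continuous_generateFrom_iff.mpr ?_
  rintro _ ⟨f, δ, hδ, hδ₀, rfl⟩
  rw [sub_preimage_ball]
  exact isOpen_ball _ hδ hδ₀

end C1Pos

def memFRadius (u : ℝ → ℝ) (b : ℝ) : ℝ → ℝ :=
  fun d => min (min (deriv (tildeFn u) d / (1 + d)) (tildeFn u b / b)) d⁻¹

lemma continuousOn_memFRadius {u : ℝ → ℝ} (hu : ContDiffOn ℝ 1 u (Ioi 0)) (b : ℝ) :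
    ContinuousOn (memFRadius u b) (Ioi 0) := by
  have hD : ContinuousOn (deriv (tildeFn u)) (Ioi 0) :=
    (contDiffOn_tildeFn hu).continuousOn_deriv_of_isOpen isOpen_Ioi le_rfl
  have hquot : ContinuousOn (fun d => deriv (tildeFn u) d / (1 + d)) (Ioi 0) :=
    hD.div (by fun_prop) fun d hd => by linarith [mem_Ioi.mp hd]
  exact (hquot.inf continuousOn_const).inf
    (continuousOn_inv₀.mono fun d hd => (mem_Ioi.mp hd).ne')

lemma MemF.memFRadius_pos {u : ℝ → ℝ} (hu : MemF u) {b : ℝ} (hb : 0 < b)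
    (hub : 0 < tildeFn u b) {d : ℝ} (hd : 0 < d) : 0 < memFRadius u b d :=
  lt_min (lt_min (div_pos (hu.2.1 d hd) (by linarith)) (div_pos hub hb)) (inv_pos.mpr hd)

lemma MemF.of_near {u v : ℝ → ℝ} (hu : MemF u) (hv : ContDiffOn ℝ 1 v (Ioi 0)) {b : ℝ}
    (hb : 0 < b) (hub : 0 < tildeFn u b)
    (hnear : ∀ d > (0 : ℝ), |v d - u d| + |deriv v d - deriv u d| < memFRadius u b d) :
    MemF v := by
  obtain ⟨hu₁, -, -, hu₄⟩ := hu
  have htilde : ∀ d > (0 : ℝ), |tildeFn v d - tildeFn u d| < d * memFRadius u b d := by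
    intro d hd
    rw [tildeFn_sub_tildeFn, abs_mul, abs_of_pos hd]
    exact mul_lt_mul_of_pos_left ((le_add_of_nonneg_right (abs_nonneg _)).trans_lt
      (hnear d hd)) hd
  have hcont : ContinuousOn (tildeFn v) (Ioi 0) := (contDiffOn_tildeFn hv).continuousOn
  have hvb : 0 < tildeFn v b := by
    have h := htilde b hb
    have : b * memFRadius u b b ≤ tildeFn u b := by
      calc b * memFRadius u b b ≤ b * (tildeFn u b / b) :=
            mul_le_mul_of_nonneg_left ((min_le_left _ _).trans (min_le_right _ _)) hb.le
        _ = tildeFn u b := by field_simp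
    linarith [neg_abs_le (tildeFn v b - tildeFn u b)]
  have hle : ∀ d > (0 : ℝ), tildeFn v d ≤ tildeFn u d + 1 := by
    intro d hd
    have h := htilde d hd
    have : d * memFRadius u b d ≤ 1 := by
      calc d * memFRadius u b d ≤ d * d⁻¹ := mul_le_mul_of_nonneg_left (min_le_right _ _) hd.le
        _ = 1 := mul_inv_cancel₀ hd.ne'
    linarith [le_abs_self (tildeFn v d - tildeFn u d)]
  have hlim : Tendsto (fun d => ∫ x in d..(1 : ℝ), tildeFn v x) (𝓝[>] 0) atBot :=
    tendsto_integral_atBot_of_le_add hcont (contDiffOn_tildeFn hu₁).continuousOn hle hu₄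
  refine ⟨hv, fun d hd => deriv_tildeFn_pos_of_near hu₁ hv hd ?_,
    exists_zero_of_tendsto_integral_atBot hcont hlim hb hvb, hlim⟩
  have h := (hnear d hd).trans_le ((min_le_left _ _).trans (min_le_left _ _))
  rwa [lt_div_iff₀' (by linarith)] at h

lemma isOpen_setOf_memF : IsOpen {u : C1Pos | MemF u.1} := by
  refine isOpen_iff_forall_mem_open.mpr fun u hu => ?_
  obtain ⟨b, hb, hub⟩ := hu.exists_tildeFn_pos
  have hpos : ∀ d > (0 : ℝ), 0 < memFRadius u.1 b d := fun d hd => hu.memFRadius_pos hb hub hd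
  exact ⟨_, fun v hv => hu.of_near v.2 hb hub hv,
    C1Pos.isOpen_ball u (continuousOn_memFRadius u.2 b) hpos, fun d hd => by simpa using hpos d hd⟩

lemma FF.exists_continuousAt_lift {T : C1Pos → C1Pos} (hT : Continuous T) (F₀ : FF)
    (hF₀ : MemF (T F₀.1).1) :
    ∃ S : FF → FF, ContinuousAt S F₀ ∧ ∀ᶠ F in 𝓝 F₀, (S F).1 = T F.1 := by
  let S : FF → FF := fun F => if hF : MemF (T F.1).1 then ⟨T F.1, hF⟩ else F₀
  have hopen : IsOpen {F : FF | MemF (T F.1).1} :=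
    isOpen_setOf_memF.preimage (hT.comp continuous_subtype_val)
  have hS : ∀ᶠ F in 𝓝 F₀, (S F).1 = T F.1 := by
    filter_upwards [hopen.mem_nhds hF₀] with F hF
    exact congrArg Subtype.val (dif_pos hF)
  refine ⟨S, ?_, hS⟩
  exact Topology.IsInducing.subtypeVal.continuousAt_iff.mpr
    ((hT.comp continuous_subtype_val).continuousAt.congr (hS.mono fun _ h => h.symm))

theorem statement13_general (N : ℕ)
    (ρ : FF × FF × FF × (Fin (2*N-6) → FF) → FF × (Fin (2*N-6) → FF))
    (hρ : ∀ x : FF × FF × FF × (Fin (2*N-6) → FF),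
      ((ρ x).1.1.1 = fun d => x.2.2.1.1.1 d + g23Case1 x.1.1.1 x.2.1.1.1 d) ∧
      (ρ x).2 = x.2.2.2) :
    IsOpenMap ρ := by
  refine isOpenMap_of_eventually_rightInverse fun x => ?_
  obtain ⟨f₁₂, f₁₃, f₂₃, h⟩ := x
  set g := g23Case1 f₁₂.1.1 f₁₃.1.1
  have hsum : (ρ (f₁₂, f₁₃, f₂₃, h)).1.1.1 = f₂₃.1.1 + g := (hρ _).1
  have hg : ContDiffOn ℝ 1 g (Ioi 0) := by
    simpa [hsum] using (ρ (f₁₂, f₁₃, f₂₃, h)).1.1.2.sub f₂₃.1.2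
  obtain ⟨S, hSc, hS⟩ := FF.exists_continuousAt_lift (C1Pos.continuous_sub g hg)
    (ρ (f₁₂, f₁₃, f₂₃, h)).1 (by simpa [C1Pos.sub, hsum] using f₂₃.2)
  refine ⟨fun y => (f₁₂, f₁₃, S y.1, y.2), ?_, ?_, ?_⟩
  · exact continuousAt_const.prodMk (continuousAt_const.prodMk
      ((hSc.comp continuousAt_fst).prodMk continuousAt_snd))
  · have hS₀ : S (ρ (f₁₂, f₁₃, f₂₃, h)).1 = f₂₃ :=
      Subtype.ext (Subtype.ext (by simp [hS.self_of_nhds, C1Pos.sub, hsum]))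
    simp [hS₀, (hρ _).2]
  · filter_upwards [continuousAt_fst.eventually hS] with y hy
    refine Prod.ext (Subtype.ext (Subtype.ext ?_)) (hρ _).2
    rw [(hρ _).1]
    funext d
    simp [hy, C1Pos.sub, g]

/-- the map `ρ₁ : 𝓕^{2N−3} → 𝓕^{2N−5}`,
`(f₁₂, f₁₃, f₂₃, h) ↦ (f₂₃ + g₂₃, h)` (with `g₂₃` the case-1 virtual interaction induced by
`f₁₂, f₁₃`), is an open map for the Whitney `C¹`-topologies. -/
theorem statement13 (N : ℕ) (hN : 3 ≤ N)
    (ρ : FF × FF × FF × (Fin (2*N-6) → FF) → FF × (Fin (2*N-6) → FF))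
    (hρ : ∀ x : FF × FF × FF × (Fin (2*N-6) → FF),
      ((ρ x).1.1.1 = fun d => x.2.2.1.1.1 d + g23Case1 x.1.1.1 x.2.1.1.1 d) ∧
      (ρ x).2 = x.2.2.2) :
    IsOpenMap ρ :=
  statement13_general N ρ hρ
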